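/- arXiv:2505.19738 — 3 statements merged into one kernel-verified Lean document; each statement's English description precedes it below -/
import Mathlib

section
/- Let 0<α<1 and T>0, and let u:[0,T]→ℝ be continuously differentiable. Then for every t∈(0,T], u(t)·∂_t^α u(t) ≥ (1/2)·∂_t^α(u²)(t); equivalently, u(t)·∫₀^t (t−s)^{−α} u′(s) ds ≥ ∫₀^t (t−s)^{−α} u(s)u′(s) ds. -/
open MeasureTheory intervalIntegral Set Filter Topology
open scoped Interval

/-!
The difference of the two sides is `∫₀ᵗ (t - s)^(-α) u'(s) (u(t) - u(s)) ds`. Here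
`u'(s) (u(t) - u(s))` is the derivative of `-(u(t) - u(s))² / 2`, which is `≤ 0`, and the kernel
`(t - s)^(-α)` is nonnegative and nondecreasing on `[0, t)`, so integrating by parts over `[0, b]`
bounds the integral up to `b` from below by `-(t - b)^(-α) (u(t) - u(b))² / 2`. By the mean value
theorem this is at least `-(M² / 2) (t - b)^(2 - α)` with `M` a bound for `|u'|`, which tends to
`0` as `b → t⁻`.
-/

lemma intervalIntegrable_sub_rpow_mul {p a b : ℝ} {φ : ℝ → ℝ} (hp : -1 < p)
    (hφ : ContinuousOn φ [[a, b]]) :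
    IntervalIntegrable (fun s => (b - s) ^ p * φ s) volume a b := by
  have := (intervalIntegrable_rpow' hp (a := b - a) (b := 0)).comp_sub_left b
  simp only [sub_sub_cancel, sub_zero] at this
  exact this.mul_continuousOn hφ

lemma hasDerivAt_const_sub_rpow {p t x : ℝ} (hx : x ≠ t) :
    HasDerivAt (fun s => (t - s) ^ p) (-p * (t - x) ^ (p - 1)) x := by
  convert ((hasDerivAt_id' x).const_sub t).rpow_const (p := p) (Or.inl (sub_ne_zero.2 hx.symm))
    using 1
  ring

lemma neg_mul_sq_div_two_le_integral_mul_deriv_mul_sub {K K' u u' : ℝ → ℝ} {a b c : ℝ}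
    (hab : a ≤ b) (hK : ∀ x ∈ Icc a b, HasDerivAt K (K' x) x)
    (hK'_nonneg : ∀ x ∈ Icc a b, 0 ≤ K' x) (hK' : IntervalIntegrable K' volume a b)
    (hKa : 0 ≤ K a) (hu : ∀ x ∈ Icc a b, HasDerivAt u (u' x) x)
    (hu' : IntervalIntegrable u' volume a b) :
    -(K b * ((c - u b) ^ 2 / 2)) ≤ ∫ x in a..b, K x * (u' x * (c - u x)) := by
  rw [← uIcc_of_le hab] at hK hu
  have hv : ∀ x ∈ [[a, b]], HasDerivAt (fun x => -((c - u x) ^ 2 / 2)) (u' x * (c - u x)) x :=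
    fun x hx => ((((hu x hx).const_sub c).pow 2).div_const 2).neg.congr_deriv (by ring)
  have hu_cont : ContinuousOn u [[a, b]] := fun x hx => (hu x hx).continuousAt.continuousWithinAt
  rw [integral_mul_deriv_eq_deriv_mul hK hv hK'
    (hu'.mul_continuousOn (continuousOn_const.sub hu_cont))]
  have hKa_term : 0 ≤ K a * ((c - u a) ^ 2 / 2) := by positivity
  have h_rest : 0 ≤ ∫ x in a..b, K' x * ((c - u x) ^ 2 / 2) :=
    integral_nonneg hab fun x hx => mul_nonneg (hK'_nonneg x hx) (by positivity)
  simp only [mul_neg, intervalIntegral.integral_neg]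
  linarith

section CaputoKernel

variable {α a t : ℝ} {u u' : ℝ → ℝ}

lemma neg_mul_rpow_le_integral_sub_rpow_mul_deriv_mul_sub {M b : ℝ} (hα : 0 ≤ α)
    (hb : b ∈ Ico a t) (hu : ∀ s ∈ Icc a t, HasDerivAt u (u' s) s)
    (hu' : ContinuousOn u' (Icc a t)) (hM : ∀ s ∈ Icc a t, ‖u' s‖ ≤ M) :
    -(M ^ 2 / 2 * (t - b) ^ (2 - α)) ≤
      ∫ s in a..b, (t - s) ^ (-α) * (u' s * (u t - u s)) := by
  obtain ⟨hab, hbt⟩ := hb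
  have htb : 0 < t - b := sub_pos.2 hbt
  have hsub : Icc a b ⊆ Icc a t := Icc_subset_Icc_right hbt.le
  have hK : ∀ x ∈ Icc a b,
      HasDerivAt (fun s => (t - s) ^ (-α)) (α * (t - x) ^ (-α - 1)) x := fun x hx =>
    (hasDerivAt_const_sub_rpow (hx.2.trans_lt hbt).ne).congr_deriv (by ring)
  have hK' : IntervalIntegrable (fun x => α * (t - x) ^ (-α - 1)) volume a b := by
    refine ContinuousOn.intervalIntegrable_of_Icc hab (continuousOn_const.mul ?_)
    exact (continuousOn_const.sub continuousOn_id).rpow_const fun x hx =>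
      Or.inl (sub_ne_zero.2 (hx.2.trans_lt hbt).ne')
  have h_ibp := neg_mul_sq_div_two_le_integral_mul_deriv_mul_sub (c := u t) hab hK
    (fun x hx => mul_nonneg hα (Real.rpow_nonneg (by linarith [hx.2]) _)) hK'
    (Real.rpow_nonneg (by linarith) _) (fun x hx => hu x (hsub hx))
    ((hu'.mono hsub).intervalIntegrable_of_Icc hab)
  have h_lip : |u t - u b| ≤ M * (t - b) :=
    norm_image_sub_le_of_norm_deriv_le_segment'
      (fun x hx => (hu x ⟨hab.trans hx.1, hx.2⟩).hasDerivWithinAt)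
      (fun x hx => hM x ⟨hab.trans hx.1, hx.2.le⟩) t ⟨hbt.le, le_rfl⟩
  have h_sq : (u t - u b) ^ 2 ≤ (M * (t - b)) ^ 2 := by
    simpa only [sq_abs] using pow_le_pow_left₀ (abs_nonneg _) h_lip 2
  calc -(M ^ 2 / 2 * (t - b) ^ (2 - α))
      = -((t - b) ^ (-α) * ((M * (t - b)) ^ 2 / 2)) := by
        rw [show 2 - α = -α + 2 by ring, Real.rpow_add htb, Real.rpow_two]; ring
    _ ≤ -((t - b) ^ (-α) * ((u t - u b) ^ 2 / 2)) := by
        gcongr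
    _ ≤ _ := h_ibp

theorem integral_sub_rpow_mul_deriv_mul_sub_nonneg (hα0 : 0 ≤ α) (hα1 : α < 1) (hat : a < t)
    (hu : ∀ s ∈ Icc a t, HasDerivAt u (u' s) s) (hu' : ContinuousOn u' (Icc a t)) :
    0 ≤ ∫ s in a..t, (t - s) ^ (-α) * (u' s * (u t - u s)) := by
  obtain ⟨M, hM⟩ := isCompact_Icc.exists_bound_of_continuousOn hu'
  have hu_cont : ContinuousOn u (Icc a t) := fun x hx =>
    (hu x hx).continuousAt.continuousWithinAt
  have h_int : IntervalIntegrable (fun s => (t - s) ^ (-α) * (u' s * (u t - u s))) volume a t :=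
    intervalIntegrable_sub_rpow_mul (by linarith)
      (by rw [uIcc_of_le hat.le]; exact hu'.mul (continuousOn_const.sub hu_cont))
  have h_primitive : Tendsto (fun b => ∫ s in a..b, (t - s) ^ (-α) * (u' s * (u t - u s)))
      (𝓝[<] t) (𝓝 (∫ s in a..t, (t - s) ^ (-α) * (u' s * (u t - u s)))) := by
    have := continuousOn_primitive_interval' h_int left_mem_uIcc t right_mem_uIcc
    rw [uIcc_of_le hat.le] at this
    exact this.mono_left (nhdsWithin_Ico_eq_nhdsLT hat ▸ nhdsWithin_mono _ Ico_subset_Icc_self)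
  have h_bound : Tendsto (fun b => -(M ^ 2 / 2 * (t - b) ^ (2 - α))) (𝓝[<] t) (𝓝 0) := by
    have h_cont : Continuous fun b => -(M ^ 2 / 2 * (t - b) ^ (2 - α)) :=
      ((Real.continuous_rpow_const (by linarith)).comp (continuous_const.sub continuous_id)
        |>.const_mul _).neg
    simpa [Real.zero_rpow (by linarith : 2 - α ≠ 0)] using
      (h_cont.tendsto t).mono_left nhdsWithin_le_nhds
  refine le_of_tendsto_of_tendsto h_bound h_primitive ?_
  filter_upwards [Ico_mem_nhdsLT hat] with b hb
  exact neg_mul_rpow_le_integral_sub_rpow_mul_deriv_mul_sub hα0 hb hu hu' hM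

end CaputoKernel

theorem alikhanov_inequality_general (α T : ℝ) (hα0 : 0 < α) (hα1 : α < 1)
    (u u' : ℝ → ℝ)
    (hderiv : ∀ s ∈ Set.Icc (0:ℝ) T, HasDerivAt u (u' s) s)
    (hcont : ContinuousOn u' (Set.Icc (0:ℝ) T)) :
    ∀ t ∈ Set.Ioc (0:ℝ) T,
      u t * ∫ s in (0:ℝ)..t, (t - s) ^ (-α) * u' s ≥
        ∫ s in (0:ℝ)..t, (t - s) ^ (-α) * (u s * u' s) := by
  rintro t ⟨ht0, htT⟩
  have hsub : Icc 0 t ⊆ Icc 0 T := Icc_subset_Icc_right htT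
  have hu : ∀ s ∈ Icc 0 t, HasDerivAt u (u' s) s := fun s hs => hderiv s (hsub hs)
  have hu' : ContinuousOn u' (Icc 0 t) := hcont.mono hsub
  have hu_cont : ContinuousOn u (Icc 0 t) := fun s hs => (hu s hs).continuousAt.continuousWithinAt
  have h_int {φ : ℝ → ℝ} (hφ : ContinuousOn φ (Icc 0 t)) :
      IntervalIntegrable (fun s => (t - s) ^ (-α) * φ s) volume 0 t :=
    intervalIntegrable_sub_rpow_mul (by linarith) (by rwa [uIcc_of_le ht0.le])
  have h_diff : u t * (∫ s in (0:ℝ)..t, (t - s) ^ (-α) * u' s)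
      - ∫ s in (0:ℝ)..t, (t - s) ^ (-α) * (u s * u' s)
      = ∫ s in (0:ℝ)..t, (t - s) ^ (-α) * (u' s * (u t - u s)) := by
    rw [← intervalIntegral.integral_const_mul, ← intervalIntegral.integral_sub]
    · exact intervalIntegral.integral_congr fun s _ => by ring
    · exact (h_int hu').const_mul _
    · exact h_int (hu_cont.mul hu')
  have := integral_sub_rpow_mul_deriv_mul_sub_nonneg hα0.le hα1 ht0 hu hu'
  linarith

/-- Alikhanov's inequality: for `0 < α < 1` and a continuously differentiable
`u : [0,T] → ℝ`, for every `t ∈ (0,T]` we have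
`u(t) · ∫₀ᵗ (t−s)^{−α} u′(s) ds ≥ ∫₀ᵗ (t−s)^{−α} u(s) u′(s) ds`,
which is the inequality `u(t) ∂_t^α u(t) ≥ (1/2) ∂_t^α (u²)(t)` after dividing
by `Γ(1−α)` and using `(u²)′ = 2 u u′`. -/
theorem alikhanov_inequality (α T : ℝ) (hα0 : 0 < α) (hα1 : α < 1) (hT : 0 < T)
    (u u' : ℝ → ℝ)
    (hderiv : ∀ s ∈ Set.Icc (0:ℝ) T, HasDerivAt u (u' s) s)
    (hcont : ContinuousOn u' (Set.Icc (0:ℝ) T)) :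
    ∀ t ∈ Set.Ioc (0:ℝ) T,
      u t * ∫ s in (0:ℝ)..t, (t - s) ^ (-α) * u' s ≥
        ∫ s in (0:ℝ)..t, (t - s) ^ (-α) * (u s * u' s) :=
  alikhanov_inequality_general α T hα0 hα1 u u' hderiv hcont
end

section
/- Let 0<α<1, l>0, T>0. Let p:[0,T]→ℝ be continuous with p(t)≥0, f:[0,l]×[0,T]→ℝ continuous, and u:[0,l]×[0,T]→ℝ continuous, continuously differentiable in t, twice continuously differentiable in x, satisfying ∂_t^α u − u_xx + p(t)u = f on (0,l)×(0,T] with u(0,t)=u(l,t)=0. Then for every t∈(0,T]: (1/Γ(1−α)) ∫₀^t (t−s)^{−α} (d/ds ∫₀^l u(x,s)² dx) ds ≤ (l²/(2π²)) ∫₀^l f(x,t)² dx. -/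
/-!
Multiply the equation by `2u` and integrate over `(0, l)`. For each `x`, Alikhanov's inequality
`∂ₜ^α (v²)(t) ≤ 2 v(t) ∂ₜ^α v(t)` together with Fubini bounds the left-hand side by
`∫₀ˡ 2u (f + u_xx - p u) dx` at time `t`. Integration by parts turns `∫ u u_xx` into `-∫ u_x²`,
Wirtinger's inequality `(π/l)² ∫ u² ≤ ∫ u_x²` absorbs the term `2uf ≤ 2(π/l)² u² + (l²/2π²) f²`
left by Young's inequality, and `p ≥ 0` takes care of the rest.
-/

open Real Set Filter MeasureTheory Function
open scoped Topology Interval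

/-- At `a` the function takes the value `g a ^ 2 / 0 = 0`. -/
theorem continuousAt_sq_div_of_hasDerivAt {g φ : ℝ → ℝ} {g' φ' a : ℝ}
    (hg : HasDerivAt g g' a) (hφ : HasDerivAt φ φ' a) (hga : g a = 0) (hφa : φ a = 0)
    (hφ' : φ' ≠ 0) : ContinuousAt (fun x => g x ^ 2 / φ x) a := by
  have hlim := ((hg.continuousAt.tendsto.mono_left nhdsWithin_le_nhds).mul
    hg.tendsto_slope).div hφ.tendsto_slope hφ'
  rw [hga, zero_mul, zero_div] at hlim
  rw [continuousAt_iff_punctured_nhds, hga, hφa, div_zero]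
  refine hlim.congr' (eventually_nhdsWithin_of_forall fun x hx => ?_)
  have hx : x - a ≠ 0 := sub_ne_zero.2 hx
  simp only [Pi.div_apply, slope_def_field, hga, hφa, sub_zero]
  rw [← mul_div_assoc, div_div_div_cancel_right₀ hx, sq]

theorem wirtinger_inequality {a b : ℝ} (hab : a < b) {g g' : ℝ → ℝ}
    (hg : ∀ x ∈ Icc a b, HasDerivAt g (g' x) x) (hg' : ContinuousOn g' (Icc a b))
    (ha : g a = 0) (hb : g b = 0) :
    (π / (b - a)) ^ 2 * ∫ x in a..b, g x ^ 2 ≤ ∫ x in a..b, g' x ^ 2 := by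
  set c := π / (b - a)
  have hc : 0 < c := div_pos pi_pos (sub_pos.2 hab)
  have hcb : c * (b - a) = π := div_mul_cancel₀ _ (sub_pos.2 hab).ne'
  have hsin : ∀ x ∈ Ioo a b, 0 < sin (c * (x - a)) := fun x hx =>
    sin_pos_of_pos_of_lt_pi (mul_pos hc (sub_pos.2 hx.1))
      (hcb ▸ mul_lt_mul_of_pos_left (by linarith [hx.2]) hc)
  have hS : ∀ x, HasDerivAt (fun y => sin (c * (y - a))) (cos (c * (x - a)) * c) x := fun x => by
    simpa using ((hasDerivAt_id x).sub_const a).const_mul c |>.sin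
  have hC : ∀ x, HasDerivAt (fun y => c * cos (c * (y - a))) (c * (-sin (c * (x - a)) * c)) x :=
    fun x => by simpa using (((hasDerivAt_id x).sub_const a).const_mul c |>.cos).const_mul c
  have hgc : ContinuousOn g (Icc a b) := fun x hx => (hg x hx).continuousAt.continuousWithinAt
  -- `B = c g² cot (c (x - a))`, which is `0` at both ends since the sine vanishes there.
  -- Picone's identity: `B'` falls short of `g'² - c² g²` by the square `(g' - c g cot)²`.
  set B := fun x => c * cos (c * (x - a)) * (g x ^ 2 / sin (c * (x - a)))
  have hB : ∀ x ∈ Ioo a b, HasDerivAt B (g' x ^ 2 - c ^ 2 * g x ^ 2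
      - (g' x - c * g x * (cos (c * (x - a)) / sin (c * (x - a)))) ^ 2) x := fun x hx => by
    have hs := (hsin x hx).ne'
    refine ((hC x).mul (((hg x (Ioo_subset_Icc_self hx)).fun_pow 2).fun_div (hS x) hs)).congr_deriv
      ?_
    field_simp
    ring
  have hBcont : ContinuousOn B (Icc a b) := fun x hx => by
    refine ContinuousAt.continuousWithinAt ((hC x).continuousAt.mul ?_)
    rcases hx.1.eq_or_lt with rfl | hax
    · exact continuousAt_sq_div_of_hasDerivAt (hg _ hx) (hS _) ha (by simp) (by simp [hc.ne'])
    rcases hx.2.eq_or_lt with rfl | hxb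
    · exact continuousAt_sq_div_of_hasDerivAt (hg _ hx) (hS _) hb (by simp [hcb])
        (by simp [hcb, hc.ne'])
    exact ((hg x hx).continuousAt.pow 2).div (hS x).continuousAt (hsin x ⟨hax, hxb⟩).ne'
  have hg'2 : ContinuousOn (fun x => g' x ^ 2) (Icc a b) := hg'.fun_pow 2
  have hg2 : ContinuousOn (fun x => c ^ 2 * g x ^ 2) (Icc a b) :=
    continuousOn_const.mul (hgc.fun_pow 2)
  have hB_le := intervalIntegral.sub_le_integral_of_hasDeriv_right_of_le hab.le hBcont
    (fun x hx => (hB x hx).hasDerivWithinAt) ((hg'2.fun_sub hg2).integrableOn_compact isCompact_Icc)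
    (fun x _ => sub_le_self _ (sq_nonneg _))
  rw [intervalIntegral.integral_sub (hg'2.intervalIntegrable_of_Icc hab.le)
    (hg2.intervalIntegrable_of_Icc hab.le), intervalIntegral.integral_const_mul] at hB_le
  have hBa : B a = 0 := by simp [B]
  have hBb : B b = 0 := by simp [B, hcb]
  linarith

theorem dirichlet_energy_estimate {a b q : ℝ} (hab : a < b) (hq : 0 ≤ q) {g g' g'' f : ℝ → ℝ}
    (hg : ∀ x ∈ Icc a b, HasDerivAt g (g' x) x) (hg' : ∀ x ∈ Icc a b, HasDerivAt g' (g'' x) x)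
    (hg'' : ContinuousOn g'' (Icc a b)) (hf : ContinuousOn f (Icc a b))
    (ha : g a = 0) (hb : g b = 0) :
    ∫ x in a..b, 2 * g x * (f x + g'' x - q * g x) ≤
      (b - a) ^ 2 / (2 * π ^ 2) * ∫ x in a..b, f x ^ 2 := by
  have hgc : ContinuousOn g (Icc a b) := fun x hx => (hg x hx).continuousAt.continuousWithinAt
  have hg'c : ContinuousOn g' (Icc a b) := fun x hx => (hg' x hx).continuousAt.continuousWithinAt
  have hint : ∀ {φ : ℝ → ℝ}, ContinuousOn φ (Icc a b) → IntervalIntegrable φ volume a b :=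
    fun hφ => hφ.intervalIntegrable_of_Icc hab.le
  have hibp : ∫ x in a..b, g x * g'' x = -∫ x in a..b, g' x ^ 2 := by
    have h := intervalIntegral.integral_mul_deriv_eq_deriv_mul
      (by rwa [uIcc_of_le hab.le]) (by rwa [uIcc_of_le hab.le]) (hint hg'c) (hint hg'')
    rw [ha, hb] at h
    simpa [sq] using h
  set k := (π / (b - a)) ^ 2
  set C := (b - a) ^ 2 / (2 * π ^ 2)
  have hC : 0 ≤ C := by positivity
  have hCk : C * (2 * k) = 1 := by
    have := (sub_pos.2 hab).ne'
    simp only [k, C, div_pow]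
    field_simp
  calc ∫ x in a..b, 2 * g x * (f x + g'' x - q * g x)
      ≤ ∫ x in a..b, C * f x ^ 2 + 2 * (k * g x ^ 2 + g x * g'' x) := by
        refine intervalIntegral.integral_mono_on hab.le
          (hint ((continuousOn_const.mul hgc).mul ((hf.add hg'').sub (continuousOn_const.mul hgc))))
          (hint ((continuousOn_const.mul (hf.pow 2)).add (continuousOn_const.mul
            ((continuousOn_const.mul (hgc.pow 2)).add (hgc.mul hg''))))) fun x _ => ?_
        have young : C * f x ^ 2 + 2 * (k * g x ^ 2 + g x * g'' x)
            - 2 * g x * (f x + g'' x - q * g x) =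
              C * (f x - 2 * k * g x) ^ 2 + 2 * q * g x ^ 2 := by
          linear_combination (2 * g x * f x - 2 * k * g x ^ 2) * hCk
        nlinarith [mul_nonneg hC (sq_nonneg (f x - 2 * k * g x)), mul_nonneg hq (sq_nonneg (g x))]
    _ = C * (∫ x in a..b, f x ^ 2) +
          2 * (k * (∫ x in a..b, g x ^ 2) + ∫ x in a..b, g x * g'' x) := by
        have hf2 : IntervalIntegrable (fun x => f x ^ 2) volume a b := hint (hf.pow 2)
        have hg2 : IntervalIntegrable (fun x => g x ^ 2) volume a b := hint (hgc.pow 2)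
        have hgg'' : IntervalIntegrable (fun x => g x * g'' x) volume a b := hint (hgc.mul hg'')
        rw [intervalIntegral.integral_add (hf2.const_mul C)
            ((hg2.const_mul k).add hgg'' |>.const_mul 2),
          intervalIntegral.integral_const_mul, intervalIntegral.integral_const_mul,
          intervalIntegral.integral_add (hg2.const_mul k) hgg'',
          intervalIntegral.integral_const_mul]
    _ ≤ C * ∫ x in a..b, f x ^ 2 := by
        have : k * ∫ x in a..b, g x ^ 2 ≤ ∫ x in a..b, g' x ^ 2 :=
          wirtinger_inequality hab hg hg'c ha hb
        rw [hibp]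
        linarith

theorem integrableOn_sub_rpow_neg {α : ℝ} (hα : α < 1) (t a b : ℝ) :
    IntegrableOn (fun s => (t - s) ^ (-α)) (Icc a b) := by
  have h := (intervalIntegral.intervalIntegrable_rpow' (r := -α) (a := t - a) (b := t - b)
    (by linarith)).comp_sub_left t
  simp only [sub_sub_cancel] at h
  exact ((intervalIntegrable_iff' (by finiteness)).1 h).mono_set Icc_subset_uIcc

/-- With `K s = (t - s) ^ (-α)` and `G = K · (v t - v ·)²`, the gap between the two sides is
`-∫ K (v t - v ·)²'`, and `K (v t - v ·)²' ≤ G'` because `K' ≥ 0`; so the gap is at least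
`G a - G t = G a ≥ 0`. -/
theorem alikhanov_inequality_s3 {α a t : ℝ} (hα0 : 0 ≤ α) (hα1 : α < 1) (hat : a < t)
    {v v' : ℝ → ℝ} (hv : ∀ s ∈ Icc a t, HasDerivAt v (v' s) s) (hv' : ContinuousOn v' (Icc a t)) :
    ∫ s in a..t, (t - s) ^ (-α) * (2 * v s * v' s) ≤
      2 * v t * ∫ s in a..t, (t - s) ^ (-α) * v' s := by
  have hvc : ContinuousOn v (Icc a t) := fun s hs => (hv s hs).continuousAt.continuousWithinAt
  have hK := integrableOn_sub_rpow_neg hα1 t a t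
  set G := fun s => (t - s) ^ (-α) * (v t - v s) ^ 2
  -- Near `t`, `G s = (t - s) ^ (2 - α) * (slope v t s)²`, and the slope tends to `v' t`.
  have hGt : ContinuousWithinAt G (Icc a t) t := by
    refine (continuousWithinAt_Iio_iff_Iic.1 ?_).mono Icc_subset_Iic_self
    have hslope := (hv t ⟨hat.le, le_rfl⟩).tendsto_slope.mono_left
      (nhdsWithin_mono t fun s (hs : s < t) => hs.ne)
    have hpow : Tendsto (fun s => (t - s) ^ (2 - α)) (𝓝[<] t) (𝓝 0) := by
      have := ((continuous_const.sub continuous_id).rpow_const fun _ => Or.inr (by linarith) :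
        Continuous fun s : ℝ => (t - s) ^ (2 - α)).tendsto t
      simpa [zero_rpow (by linarith : 2 - α ≠ 0)] using this.mono_left nhdsWithin_le_nhds
    have hlim := hpow.mul (hslope.pow 2)
    rw [zero_mul] at hlim
    simp only [ContinuousWithinAt, G, sub_self, ne_eq, OfNat.ofNat_ne_zero, not_false_eq_true,
      zero_pow, mul_zero]
    refine hlim.congr' (eventually_nhdsWithin_of_forall fun s (hs : s < t) => ?_)
    have hts : 0 < t - s := sub_pos.2 hs
    have hst : s - t ≠ 0 := sub_ne_zero.2 hs.ne
    rw [slope_def_field, show 2 - α = 2 + -α by ring, rpow_add hts, rpow_two]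
    field_simp
    ring
  have hG : ContinuousOn G (Icc a t) := fun s hs => by
    rcases hs.2.eq_or_lt with rfl | hst
    · exact hGt
    exact ((continuous_const.sub continuous_id).continuousAt.rpow_const
      (Or.inl (sub_pos.2 hst).ne')).continuousWithinAt.mul
        ((continuousWithinAt_const.sub (hvc s hs)).pow 2)
  have hGd : ∀ s ∈ Ioo a t, HasDerivAt G (α * (t - s) ^ (-α - 1) * (v t - v s) ^ 2
      + (t - s) ^ (-α) * (2 * (v s - v t) * v' s)) s := fun s hs => by
    have hK' := ((hasDerivAt_id s).const_sub t).rpow_const (p := -α) (Or.inl (sub_pos.2 hs.2).ne')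
    refine (hK'.mul (((hv s (Ioo_subset_Icc_self hs)).const_sub (v t)).fun_pow 2)).congr_deriv ?_
    simp only [id]
    ring
  have hKmul : ∀ {w : ℝ → ℝ}, ContinuousOn w (Icc a t) →
      IntervalIntegrable (fun s => (t - s) ^ (-α) * w s) volume a t := fun hw =>
    (intervalIntegrable_iff_integrableOn_Icc_of_le hat.le).2 (hK.mul_continuousOn hw isCompact_Icc)
  have hvv' : ContinuousOn (fun s => 2 * (v s - v t) * v' s) (Icc a t) :=
    (continuousOn_const.mul (hvc.sub continuousOn_const)).mul hv'
  have hG_le := intervalIntegral.integral_le_sub_of_hasDeriv_right_of_le hat.le hG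
    (fun s hs => (hGd s hs).hasDerivWithinAt)
    ((intervalIntegrable_iff_integrableOn_Icc_of_le hat.le).1 (hKmul hvv'))
    (fun s hs => le_add_of_nonneg_left (by have := sub_pos.2 hs.2; positivity))
  have hGa : 0 ≤ G a := by have := sub_pos.2 hat; positivity
  have hGt0 : G t = 0 := by simp [G]
  have hsplit : ∫ s in a..t, (t - s) ^ (-α) * (2 * (v s - v t) * v' s) =
      (∫ s in a..t, (t - s) ^ (-α) * (2 * v s * v' s)) -
        2 * v t * ∫ s in a..t, (t - s) ^ (-α) * v' s := by
    rw [← intervalIntegral.integral_const_mul, ← intervalIntegral.integral_sub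
      (hKmul (w := fun s => 2 * v s * v' s) ((continuousOn_const.mul hvc).mul hv'))
      ((hKmul hv').const_mul _)]
    exact intervalIntegral.integral_congr fun s _ => by ring
  linarith

section Rectangle

variable {a b c d : ℝ}

theorem hasDerivAt_intervalIntegral_of_continuousOn {F F' : ℝ → ℝ → ℝ} {s : ℝ} (hab : a ≤ b)
    (hF : ContinuousOn (uncurry F) (Icc a b ×ˢ Icc c d))
    (hF' : ContinuousOn (uncurry F') (Icc a b ×ˢ Icc c d))
    (hderiv : ∀ x ∈ Icc a b, ∀ τ ∈ Ioo c d, HasDerivAt (F x) (F' x τ) τ) (hs : s ∈ Ioo c d) :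
    HasDerivAt (fun τ => ∫ x in a..b, F x τ) (∫ x in a..b, F' x s) s := by
  obtain ⟨C, hC⟩ := (isCompact_Icc.prod isCompact_Icc).exists_bound_of_continuousOn hF'
  have hmeas : ∀ {G : ℝ → ℝ → ℝ}, ContinuousOn (uncurry G) (Icc a b ×ˢ Icc c d) →
      ∀ τ ∈ Icc c d, AEStronglyMeasurable (G · τ) (volume.restrict (Ι a b)) := fun hG τ hτ => by
    rw [uIoc_of_le hab]
    exact ((hG.uncurry_right τ hτ).mono Ioc_subset_Icc_self).aestronglyMeasurable measurableSet_Ioc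
  have hsIcc := Ioo_subset_Icc_self hs
  refine (intervalIntegral.hasDerivAt_integral_of_dominated_loc_of_deriv_le
    (bound := fun _ => C) (isOpen_Ioo.mem_nhds hs)
    (eventually_of_mem (isOpen_Ioo.mem_nhds hs) fun τ hτ => hmeas hF τ (Ioo_subset_Icc_self hτ))
    ((hF.uncurry_right s hsIcc).intervalIntegrable_of_Icc hab) (hmeas hF' s hsIcc)
    (ae_of_all _ fun x hx τ hτ => hC (x, τ) ⟨?_, Ioo_subset_Icc_self hτ⟩) intervalIntegrable_const
    (ae_of_all _ fun x hx τ hτ => hderiv x ?_ τ hτ)).2 <;>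
  · rw [uIoc_of_le hab] at hx
    exact Ioc_subset_Icc_self hx

theorem MeasureTheory.IntegrableOn.comp_snd_mul_continuousOn {K : ℝ → ℝ} {H : ℝ → ℝ → ℝ}
    (hK : IntegrableOn K (Icc c d)) (hH : ContinuousOn (uncurry H) (Icc a b ×ˢ Icc c d)) :
    IntegrableOn (fun q : ℝ × ℝ => K q.2 * H q.1 q.2) (Icc a b ×ˢ Icc c d) := by
  have hK2 : IntegrableOn (fun q : ℝ × ℝ => K q.2) (Icc a b ×ˢ Icc c d) := by
    rw [IntegrableOn, Measure.volume_eq_prod, ← Measure.prod_restrict]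
    exact hK.comp_snd _
  exact hK2.mul_continuousOn hH (isCompact_Icc.prod isCompact_Icc)

theorem intervalIntegral_mul_intervalIntegral_swap {K : ℝ → ℝ} {H : ℝ → ℝ → ℝ} (hab : a ≤ b)
    (hcd : c ≤ d) (hK : IntegrableOn K (Icc c d))
    (hH : ContinuousOn (uncurry H) (Icc a b ×ˢ Icc c d)) :
    ∫ s in c..d, K s * ∫ x in a..b, H x s = ∫ x in a..b, ∫ s in c..d, K s * H x s := by
  simp_rw [← intervalIntegral.integral_const_mul]
  refine (intervalIntegral_intervalIntegral_swap ?_).symm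
  rw [uIoc_of_le hab, uIoc_of_le hcd]
  exact (hK.comp_snd_mul_continuousOn hH).mono_set
    (prod_mono Ioc_subset_Icc_self Ioc_subset_Icc_self)

theorem intervalIntegrable_intervalIntegral_mul {K : ℝ → ℝ} {H : ℝ → ℝ → ℝ} (hab : a ≤ b)
    (hcd : c ≤ d) (hK : IntegrableOn K (Icc c d))
    (hH : ContinuousOn (uncurry H) (Icc a b ×ˢ Icc c d)) :
    IntervalIntegrable (fun x => ∫ s in c..d, K s * H x s) volume a b := by
  have h := (hK.comp_snd_mul_continuousOn hH).mono_set
    (prod_mono Ioc_subset_Icc_self Ioc_subset_Icc_self)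
  rw [IntegrableOn, Measure.volume_eq_prod, ← Measure.prod_restrict] at h
  rw [intervalIntegrable_iff_integrableOn_Ioc_of_le hab, IntegrableOn]
  simpa only [intervalIntegral.integral_of_le hcd] using h.integral_prod_left

theorem intervalIntegral_mul_deriv_integral_sq {K : ℝ → ℝ} {u ut : ℝ → ℝ → ℝ} (hab : a ≤ b)
    (hcd : c ≤ d) (hK : IntegrableOn K (Icc c d))
    (hu : ContinuousOn (uncurry u) (Icc a b ×ˢ Icc c d))
    (hut_cont : ContinuousOn (uncurry ut) (Icc a b ×ˢ Icc c d))
    (hut : ∀ x ∈ Icc a b, ∀ τ ∈ Ioo c d, HasDerivAt (u x) (ut x τ) τ) :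
    ∫ s in c..d, K s * deriv (fun τ => ∫ x in a..b, u x τ ^ 2) s =
      ∫ x in a..b, ∫ s in c..d, K s * (2 * u x s * ut x s) := by
  have hH : ContinuousOn (uncurry fun x s => 2 * u x s * ut x s) (Icc a b ×ˢ Icc c d) :=
    (continuousOn_const.mul hu).mul hut_cont
  rw [← intervalIntegral_mul_intervalIntegral_swap hab hcd hK hH]
  simp only [intervalIntegral.integral_of_le hcd, integral_Ioc_eq_integral_Ioo]
  refine setIntegral_congr_fun measurableSet_Ioo fun s hs => ?_
  rw [(hasDerivAt_intervalIntegral_of_continuousOn (F := fun x τ => u x τ ^ 2) hab (hu.fun_pow 2)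
    hH (fun x hx τ hτ => ((hut x hx τ hτ).pow 2).congr_deriv (by ring)) hs).deriv]

end Rectangle

theorem fractional_energy_inequality_general (α l T : ℝ) (hα0 : 0 < α) (hα1 : α < 1)
    (hl : 0 < l)
    (p : ℝ → ℝ) (f : ℝ → ℝ → ℝ)
    (u ut ux uxx : ℝ → ℝ → ℝ)
    (hp_nonneg : ∀ t ∈ Set.Icc (0:ℝ) T, 0 ≤ p t)
    (hf_cont : ContinuousOn (fun q : ℝ × ℝ => f q.1 q.2)
      (Set.Icc 0 l ×ˢ Set.Icc 0 T))
    (hu_cont : ContinuousOn (fun q : ℝ × ℝ => u q.1 q.2)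
      (Set.Icc 0 l ×ˢ Set.Icc 0 T))
    (hut_cont : ContinuousOn (fun q : ℝ × ℝ => ut q.1 q.2)
      (Set.Icc 0 l ×ˢ Set.Icc 0 T))
    (huxx_cont : ContinuousOn (fun q : ℝ × ℝ => uxx q.1 q.2)
      (Set.Icc 0 l ×ˢ Set.Icc 0 T))
    (hut : ∀ x ∈ Set.Icc (0:ℝ) l, ∀ s ∈ Set.Icc (0:ℝ) T,
      HasDerivAt (fun τ => u x τ) (ut x s) s)
    (hux : ∀ t ∈ Set.Icc (0:ℝ) T, ∀ x ∈ Set.Icc (0:ℝ) l,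
      HasDerivAt (fun y => u y t) (ux x t) x)
    (huxx : ∀ t ∈ Set.Icc (0:ℝ) T, ∀ x ∈ Set.Icc (0:ℝ) l,
      HasDerivAt (fun y => ux y t) (uxx x t) x)
    (hPDE : ∀ x ∈ Set.Ioo (0:ℝ) l, ∀ t ∈ Set.Ioc (0:ℝ) T,
      (1 / Real.Gamma (1 - α)) * (∫ s in (0:ℝ)..t, (t - s) ^ (-α) * ut x s)
        - uxx x t + p t * u x t = f x t)
    (hBC : ∀ t ∈ Set.Icc (0:ℝ) T, u 0 t = 0 ∧ u l t = 0) :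
    ∀ t ∈ Set.Ioc (0:ℝ) T,
      (1 / Real.Gamma (1 - α)) *
          (∫ s in (0:ℝ)..t, (t - s) ^ (-α) *
            deriv (fun τ => ∫ x in (0:ℝ)..l, (u x τ) ^ 2) s) ≤
        (l ^ 2 / (2 * Real.pi ^ 2)) * ∫ x in (0:ℝ)..l, (f x t) ^ 2 := by
  rintro t ⟨ht0, htT⟩
  have htIcc : t ∈ Icc 0 T := ⟨ht0.le, htT⟩
  have hΓ : 0 < Gamma (1 - α) := Gamma_pos_of_pos (by linarith)
  have hK := integrableOn_sub_rpow_neg hα1 t 0 t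
  have hrect : Icc 0 l ×ˢ Icc 0 t ⊆ Icc 0 l ×ˢ Icc 0 T :=
    prod_mono subset_rfl (Icc_subset_Icc_right htT)
  have hpointwise : ∀ x ∈ Ioo 0 l, ∫ s in 0..t, (t - s) ^ (-α) * (2 * u x s * ut x s) ≤
      Gamma (1 - α) * (2 * u x t * (f x t + uxx x t - p t * u x t)) := fun x hx => by
    have hcaputo : ∫ s in 0..t, (t - s) ^ (-α) * ut x s =
        Gamma (1 - α) * (f x t + uxx x t - p t * u x t) := by
      have := hPDE x hx t ⟨ht0, htT⟩
      field_simp at this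
      linarith
    replace hx := Ioo_subset_Icc_self hx
    calc _ ≤ 2 * u x t * ∫ s in 0..t, (t - s) ^ (-α) * ut x s :=
          alikhanov_inequality_s3 hα0.le hα1 ht0 (fun s hs => hut x hx s ⟨hs.1, hs.2.trans htT⟩)
            ((hut_cont.uncurry_left x hx).mono (Icc_subset_Icc_right htT))
      _ = _ := by rw [hcaputo]; ring
  have hslice : ∀ {w : ℝ → ℝ → ℝ}, ContinuousOn (uncurry w) (Icc 0 l ×ˢ Icc 0 T) →
      ContinuousOn (w · t) (Icc 0 l) := fun hw => hw.uncurry_right t htIcc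
  have hrhs : IntervalIntegrable
      (fun x => Gamma (1 - α) * (2 * u x t * (f x t + uxx x t - p t * u x t))) volume 0 l :=
    (continuousOn_const.mul ((continuousOn_const.mul (hslice hu_cont)).mul
      ((hslice hf_cont).add (hslice huxx_cont) |>.sub
        (continuousOn_const.mul (hslice hu_cont))))).intervalIntegrable_of_Icc hl.le
  calc (1 / Gamma (1 - α)) * ∫ s in 0..t, (t - s) ^ (-α) * deriv (fun τ => ∫ x in 0..l, u x τ ^ 2) s
      ≤ (1 / Gamma (1 - α)) *
          ∫ x in 0..l, Gamma (1 - α) * (2 * u x t * (f x t + uxx x t - p t * u x t)) := by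
        rw [intervalIntegral_mul_deriv_integral_sq hl.le ht0.le hK (hu_cont.mono hrect)
          (hut_cont.mono hrect) fun x hx s hs => hut x hx s ⟨hs.1.le, hs.2.le.trans htT⟩]
        gcongr
        exact intervalIntegral.integral_mono_on_of_le_Ioo hl.le
          (intervalIntegrable_intervalIntegral_mul hl.le ht0.le hK
            (((continuousOn_const.mul hu_cont).mul hut_cont).mono hrect)) hrhs hpointwise
    _ = ∫ x in 0..l, 2 * u x t * (f x t + uxx x t - p t * u x t) := by
        rw [intervalIntegral.integral_const_mul, ← mul_assoc, one_div_mul_cancel hΓ.ne', one_mul]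
    _ ≤ _ := by
        simpa using dirichlet_energy_estimate hl (hp_nonneg t htIcc) (hux t htIcc)
          (huxx t htIcc) (hslice huxx_cont) (hslice hf_cont) (hBC t htIcc).1 (hBC t htIcc).2

/-- Fractional energy inequality: for a solution `u` of
`∂_t^α u − u_xx + p(t) u = f` with homogeneous Dirichlet boundary conditions
and `p ≥ 0`, for every `t ∈ (0,T]`,
`(1/Γ(1−α)) ∫₀ᵗ (t−s)^{−α} (d/ds ∫₀ˡ u(x,s)² dx) ds ≤ (l²/(2π²)) ∫₀ˡ f(x,t)² dx`. -/
theorem fractional_energy_inequality (α l T : ℝ) (hα0 : 0 < α) (hα1 : α < 1)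
    (hl : 0 < l) (hT : 0 < T)
    (p : ℝ → ℝ) (f : ℝ → ℝ → ℝ)
    (u ut ux uxx : ℝ → ℝ → ℝ)
    (hp_cont : ContinuousOn p (Set.Icc 0 T))
    (hp_nonneg : ∀ t ∈ Set.Icc (0:ℝ) T, 0 ≤ p t)
    (hf_cont : ContinuousOn (fun q : ℝ × ℝ => f q.1 q.2)
      (Set.Icc 0 l ×ˢ Set.Icc 0 T))
    (hu_cont : ContinuousOn (fun q : ℝ × ℝ => u q.1 q.2)
      (Set.Icc 0 l ×ˢ Set.Icc 0 T))
    (hut_cont : ContinuousOn (fun q : ℝ × ℝ => ut q.1 q.2)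
      (Set.Icc 0 l ×ˢ Set.Icc 0 T))
    (hux_cont : ContinuousOn (fun q : ℝ × ℝ => ux q.1 q.2)
      (Set.Icc 0 l ×ˢ Set.Icc 0 T))
    (huxx_cont : ContinuousOn (fun q : ℝ × ℝ => uxx q.1 q.2)
      (Set.Icc 0 l ×ˢ Set.Icc 0 T))
    (hut : ∀ x ∈ Set.Icc (0:ℝ) l, ∀ s ∈ Set.Icc (0:ℝ) T,
      HasDerivAt (fun τ => u x τ) (ut x s) s)
    (hux : ∀ t ∈ Set.Icc (0:ℝ) T, ∀ x ∈ Set.Icc (0:ℝ) l,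
      HasDerivAt (fun y => u y t) (ux x t) x)
    (huxx : ∀ t ∈ Set.Icc (0:ℝ) T, ∀ x ∈ Set.Icc (0:ℝ) l,
      HasDerivAt (fun y => ux y t) (uxx x t) x)
    (hPDE : ∀ x ∈ Set.Ioo (0:ℝ) l, ∀ t ∈ Set.Ioc (0:ℝ) T,
      (1 / Real.Gamma (1 - α)) * (∫ s in (0:ℝ)..t, (t - s) ^ (-α) * ut x s)
        - uxx x t + p t * u x t = f x t)
    (hBC : ∀ t ∈ Set.Icc (0:ℝ) T, u 0 t = 0 ∧ u l t = 0) :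
    ∀ t ∈ Set.Ioc (0:ℝ) T,
      (1 / Real.Gamma (1 - α)) *
          (∫ s in (0:ℝ)..t, (t - s) ^ (-α) *
            deriv (fun τ => ∫ x in (0:ℝ)..l, (u x τ) ^ 2) s) ≤
        (l ^ 2 / (2 * Real.pi ^ 2)) * ∫ x in (0:ℝ)..l, (f x t) ^ 2 :=
  fractional_energy_inequality_general α l T hα0 hα1 hl p f u ut ux uxx hp_nonneg hf_cont hu_cont
    hut_cont huxx_cont hut hux huxx hPDE hBC
end

section
/- Let 0<α<1, k≥2, and let 0=t₀<t₁<⋯<t_k be real numbers. Define d_j = ((t_k−t_{j−1})^{1−α} − (t_k−t_j)^{1−α})/(t_j−t_{j−1}) for 1≤j≤k. Then d_j ≤ d_{j+1} for all 1≤j≤k−1; i.e., the L1 weights are nondecreasing in j. -/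
/-!
The weight `d_j` is minus the slope of the chord of `x ↦ (t_k - x)^(1-α)` over `[t_{j-1}, t_j]`.
This function is concave on `(-∞, t_k]`, being `x ↦ x^(1-α)` composed with an affine map, so
the slopes of its chords over adjacent intervals decrease and the weights increase.
-/

open Set

theorem concaveOn_rpow_sub {p : ℝ} (hp₀ : 0 ≤ p) (hp₁ : p ≤ 1) (T : ℝ) :
    ConcaveOn ℝ (Iic T) fun x : ℝ ↦ (T - x) ^ p := by
  let reflect : ℝ →ᵃ[ℝ] ℝ := AffineMap.const ℝ ℝ T - AffineMap.id ℝ ℝ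
  have hpre : reflect ⁻¹' Ici 0 = Iic T := by ext; simp [reflect]
  rw [← hpre]
  exact (Real.concaveOn_rpow hp₀ hp₁).comp_affineMap reflect

/-- In the paper's notation, `d_{k,j} = l1Weight α t_k t_{j-1} t_j`. -/
noncomputable def l1Weight (α T a b : ℝ) : ℝ :=
  ((T - a) ^ (1 - α) - (T - b) ^ (1 - α)) / (b - a)

theorem l1Weight_le_l1Weight {α T a b c : ℝ} (hα₀ : 0 ≤ α) (hα₁ : α ≤ 1)
    (hab : a < b) (hbc : b < c) (hcT : c ≤ T) :
    l1Weight α T a b ≤ l1Weight α T b c := by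
  have hconcave := concaveOn_rpow_sub (p := 1 - α) (by linarith) (by linarith) T
  have hslope := hconcave.slope_anti_adjacent (mem_Iic.2 (by linarith)) (mem_Iic.2 hcT) hab hbc
  simp only [l1Weight]
  rw [← neg_sub ((T - b) ^ (1 - α)), ← neg_sub ((T - c) ^ (1 - α)), neg_div, neg_div]
  exact neg_le_neg hslope

theorem L1_weights_monotone_general (α : ℝ) (hα0 : 0 < α) (hα1 : α < 1)
    (k : ℕ) (t : ℕ → ℝ)
    (hmono : ∀ j, j < k → t j < t (j + 1))
    (d : ℕ → ℝ)
    (hd : ∀ j, 1 ≤ j → j ≤ k →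
      d j = ((t k - t (j - 1)) ^ (1 - α) - (t k - t j) ^ (1 - α)) /
        (t j - t (j - 1))) :
    ∀ j, 1 ≤ j → j ≤ k - 1 → d j ≤ d (j + 1) := by
  intro j hj hjk
  have hprev : t (j - 1) < t j := by simpa [Nat.sub_add_cancel hj] using hmono (j - 1) (by omega)
  have hnext : t j < t (j + 1) := hmono j (by omega)
  have hlast : t (j + 1) ≤ t k :=
    (strictMonoOn_Iic_of_lt_succ hmono).monotoneOn (mem_Iic.2 (by omega)) (mem_Iic.2 le_rfl)
      (by omega)
  rw [hd j hj (by omega), hd (j + 1) (by omega) (by omega), Nat.add_sub_cancel]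
  exact l1Weight_le_l1Weight hα0.le hα1.le hprev hnext hlast

/-- Monotonicity of the nonuniform L1 weights: for `0 < α < 1`, `k ≥ 2` and mesh
points `0 = t₀ < t₁ < ⋯ < t_k`, the weights
`d_j = ((t_k − t_{j−1})^{1−α} − (t_k − t_j)^{1−α})/(t_j − t_{j−1})`
satisfy `d_j ≤ d_{j+1}` for `1 ≤ j ≤ k−1`. -/
theorem L1_weights_monotone (α : ℝ) (hα0 : 0 < α) (hα1 : α < 1)
    (k : ℕ) (hk : 2 ≤ k) (t : ℕ → ℝ) (ht0 : t 0 = 0)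
    (hmono : ∀ j, j < k → t j < t (j + 1))
    (d : ℕ → ℝ)
    (hd : ∀ j, 1 ≤ j → j ≤ k →
      d j = ((t k - t (j - 1)) ^ (1 - α) - (t k - t j) ^ (1 - α)) /
        (t j - t (j - 1))) :
    ∀ j, 1 ≤ j → j ≤ k - 1 → d j ≤ d (j + 1) :=
  L1_weights_monotone_general α hα0 hα1 k t hmono d hd
end
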